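/- Let K be a field of characteristic zero, let j ≥ 0 be an integer, and let z ∈ K with z + k ≠ 0 for all integers k with −j ≤ k ≤ j (in particular z ∉ {0, −1, …, −j}). Then ∑_{k=0}^j (−1)^k C(j,k) C(j+k,k) / (k+z) = (1−z)_j / (z)_{j+1}. -/
import Mathlib

open Polynomial Finset

private lemma asc_eval_prod {K : Type*} [CommSemiring K] (n : ℕ) (x : K) :
    (ascPochhammer K n).eval x = ∏ i ∈ Finset.range n, (x + i) := by
  induction n with
  | zero => simp
  | succ n ih =>
      rw [ascPochhammer_succ_right, Finset.prod_range_succ, ← ih]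
      simp [eval_mul]

private lemma prod_sub_eq_factorial {K : Type*} [Field K] [CharZero K] (m : ℕ) :
    ∏ i ∈ Finset.range m, ((m : K) - i) = m.factorial := by
  induction m with
  | zero => simp
  | succ m ih =>
      rw [Finset.prod_range_succ']
      have h : ∀ i ∈ Finset.range m, ((m + 1 : ℕ) : K) - ((i + 1 : ℕ) : K) = (m : K) - i := by
        intro i _; push_cast; ring
      push_cast
      rw [Finset.prod_congr rfl (fun i hi => by push_cast; ring : ∀ i ∈ Finset.range m,
        ((m : K) + 1 - ((i : K) + 1)) = (m : K) - i), ih]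
      rw [Nat.factorial_succ]
      push_cast
      ring

private lemma prod_add_one_eq_factorial {K : Type*} [Field K] [CharZero K] (n : ℕ) :
    ∏ i ∈ Finset.range n, ((i : K) + 1) = n.factorial := by
  induction n with
  | zero => simp
  | succ n ih =>
      rw [Finset.prod_range_succ, ih, Nat.factorial_succ]
      push_cast; ring

private lemma prod_erase_eval {K : Type*} [Field K] [CharZero K] (j m : ℕ) (hm : m ≤ j) :
    ∏ i ∈ (Finset.range (j + 1)).erase m, ((i : K) - m)
      = (-1) ^ m * m.factorial * (j - m).factorial := by
  have hset : (Finset.range (j + 1)).erase m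
      = Finset.range m ∪ Finset.Ico (m + 1) (j + 1) := by
    ext x; simp only [Finset.mem_erase, Finset.mem_range, Finset.mem_union, Finset.mem_Ico]
    omega
  have hdisj : Disjoint (Finset.range m) (Finset.Ico (m + 1) (j + 1)) := by
    simp only [Finset.disjoint_left, Finset.mem_range, Finset.mem_Ico]
    omega
  rw [hset, Finset.prod_union hdisj]
  have h1 : ∏ i ∈ Finset.range m, ((i : K) - m) = (-1) ^ m * m.factorial := by
    have : ∏ i ∈ Finset.range m, ((i : K) - m)
        = ∏ i ∈ Finset.range m, (-1) * ((m : K) - i) := by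
      apply Finset.prod_congr rfl; intro i _; ring
    rw [this, Finset.prod_mul_distrib, Finset.prod_const, prod_sub_eq_factorial,
      Finset.card_range]
  have h2 : ∏ i ∈ Finset.Ico (m + 1) (j + 1), ((i : K) - m) = ((j - m).factorial : K) := by
    rw [Finset.prod_Ico_eq_prod_range]
    have hc : j + 1 - (m + 1) = j - m := by omega
    rw [hc]
    rw [Finset.prod_congr rfl (fun i hi => by push_cast; ring : ∀ i ∈ Finset.range (j - m),
      ((m + 1 + i : ℕ) : K) - (m : K) = (i : K) + 1)]
    exact prod_add_one_eq_factorial (j - m)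
  rw [h1, h2]

private lemma key_poly_eq {K : Type*} [Field K] [CharZero K] (j : ℕ) :
    (∑ k ∈ Finset.range (j + 1),
        Polynomial.C ((-1 : K) ^ k * (j.choose k : K) * ((j + k).choose k : K)) *
          ∏ i ∈ (Finset.range (j + 1)).erase k, (Polynomial.X + Polynomial.C (i : K)))
      = (ascPochhammer K j).comp (1 - Polynomial.X) := by
  set P : K[X] := ∑ k ∈ Finset.range (j + 1),
      Polynomial.C ((-1 : K) ^ k * (j.choose k : K) * ((j + k).choose k : K)) *
        ∏ i ∈ (Finset.range (j + 1)).erase k, (Polynomial.X + Polynomial.C (i : K)) with hP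
  set Q : K[X] := (ascPochhammer K j).comp (1 - Polynomial.X) with hQ
  have hinj : Set.InjOn (fun m : ℕ => -(m : K)) (Finset.range (j + 1)) := by
    intro a _ b _ hab
    exact_mod_cast neg_injective hab
  have hjlt : (j : WithBot ℕ) < ((Finset.range (j + 1)).card : ℕ) := by
    rw [Finset.card_range]
    exact_mod_cast Nat.lt_succ_self j
  have hprod_deg : ∀ k ∈ Finset.range (j + 1),
      (∏ i ∈ (Finset.range (j + 1)).erase k,
        (Polynomial.X + Polynomial.C (i : K))).degree = (j : WithBot ℕ) := by
    intro k hk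
    rw [Polynomial.degree_prod]
    have : ∀ i ∈ (Finset.range (j + 1)).erase k,
        (Polynomial.X + Polynomial.C (i : K)).degree = 1 :=
      fun i _ => Polynomial.degree_X_add_C _
    rw [Finset.sum_congr rfl this, Finset.sum_const, Finset.card_erase_of_mem hk,
      Finset.card_range]
    simp [nsmul_eq_mul]
  have hdegP : P.degree < ((Finset.range (j + 1)).card : ℕ) := by
    refine lt_of_le_of_lt (Polynomial.degree_sum_le _ _) ?_
    rw [Finset.sup_lt_iff (lt_of_le_of_lt bot_le hjlt)]
    intro k hk
    refine lt_of_le_of_lt (Polynomial.degree_mul_le _ _) ?_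
    refine lt_of_le_of_lt (add_le_add Polynomial.degree_C_le (hprod_deg k hk).le) ?_
    simpa using hjlt
  have hdegQ : Q.degree < ((Finset.range (j + 1)).card : ℕ) := by
    refine lt_of_le_of_lt (Polynomial.degree_le_natDegree) ?_
    have h1 : (1 - Polynomial.X : K[X]).natDegree = 1 := by
      have : (1 - Polynomial.X : K[X]) = -(Polynomial.X - Polynomial.C 1) := by
        rw [Polynomial.C_1]; ring
      rw [this, Polynomial.natDegree_neg, Polynomial.natDegree_X_sub_C]
    have : Q.natDegree = j := by
      rw [hQ, Polynomial.natDegree_comp, ascPochhammer_natDegree, h1, mul_one]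
    rw [this]; exact hjlt
  have heval : ∀ m ∈ Finset.range (j + 1),
      P.eval (-(m : K)) = Q.eval (-(m : K)) := by
    intro m hm
    have hmj : m ≤ j := Nat.lt_succ_iff.mp (Finset.mem_range.mp hm)
    have hPeval : P.eval (-(m : K))
        = (-1 : K) ^ m * (j.choose m : K) * ((j + m).choose m : K) *
            ((-1) ^ m * m.factorial * (j - m).factorial) := by
      rw [hP, Polynomial.eval_finset_sum]
      rw [Finset.sum_eq_single m]
      · rw [Polynomial.eval_mul, Polynomial.eval_C, Polynomial.eval_prod]
        congr 1
        refine (Finset.prod_congr rfl ?_).trans (prod_erase_eval j m hmj)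
        intro i _
        rw [Polynomial.eval_add, Polynomial.eval_X, Polynomial.eval_C]
        ring
      · intro k hk hkm
        rw [Polynomial.eval_mul, Polynomial.eval_prod]
        have hmem : m ∈ (Finset.range (j + 1)).erase k :=
          Finset.mem_erase.mpr ⟨fun h => hkm h.symm, hm⟩
        rw [Finset.prod_eq_zero hmem (by simp), mul_zero]
      · intro h; exact absurd hm h
    have hQeval : Q.eval (-(m : K)) = ((m + 1).ascFactorial j : K) := by
      rw [hQ, Polynomial.eval_comp]
      have h1 : (1 - Polynomial.X : K[X]).eval (-(m : K)) = ((m + 1 : ℕ) : K) := by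
        simp; push_cast; ring
      rw [h1, ← ascPochhammer_eval_cast, ascPochhammer_nat_eq_ascFactorial]
    rw [hPeval, hQeval]
    -- arithmetic identity
    have hmf : ((m.factorial : K)) ≠ 0 := Nat.cast_ne_zero.mpr m.factorial_ne_zero
    have hc1 : (j.choose m : K) * (m.factorial : K) * ((j - m).factorial : K)
        = (j.factorial : K) := by
      exact_mod_cast congrArg (Nat.cast : ℕ → K) (Nat.choose_mul_factorial_mul_factorial hmj)
    have hc2 : ((j + m).choose m : K) * (m.factorial : K) * (j.factorial : K)
        = ((j + m).factorial : K) := by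
      have := Nat.choose_mul_factorial_mul_factorial (Nat.le_add_left m j)
      rw [Nat.add_sub_cancel] at this
      exact_mod_cast congrArg (Nat.cast : ℕ → K) this
    have hc3 : (m.factorial : K) * ((m + 1).ascFactorial j : K) = ((j + m).factorial : K) := by
      have := Nat.factorial_mul_ascFactorial m j
      rw [Nat.add_comm m j] at this
      exact_mod_cast congrArg (Nat.cast : ℕ → K) this
    have hsq : ((-1 : K) ^ m) * ((-1 : K) ^ m) = 1 := by
      rw [← pow_add]
      exact Even.neg_one_pow ⟨m, rfl⟩
    apply mul_right_cancel₀ hmf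
    linear_combination ((j.choose m : K) * ((j + m).choose m : K) * (m.factorial : K) *
        (m.factorial : K) * ((j - m).factorial : K)) * hsq +
      (((j + m).choose m : K) * (m.factorial : K)) * hc1 + hc2 - hc3
  exact Polynomial.eq_of_degrees_lt_of_eval_index_eq _ hinj hdegP hdegQ heval

theorem stmt11 {K : Type*} [Field K] [CharZero K] (j : ℕ) (z : K)
    (hz : ∀ k : ℤ, -(j : ℤ) ≤ k → k ≤ (j : ℤ) → z + (k : K) ≠ 0) :
    ∑ k ∈ Finset.range (j + 1),
        (-1 : K) ^ k * (j.choose k : K) * ((j + k).choose k : K) / ((k : K) + z)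
      = (ascPochhammer K j).eval (1 - z) / (ascPochhammer K (j + 1)).eval z := by
  have hne : ∀ i ∈ Finset.range (j + 1), z + (i : K) ≠ 0 := by
    intro i hi
    have hij : (i : ℤ) ≤ (j : ℤ) := by
      exact_mod_cast Nat.lt_succ_iff.mp (Finset.mem_range.mp hi)
    have := hz (i : ℤ) (le_trans (by simp) (Int.natCast_nonneg i)) hij
    simpa using this
  have hProd : (ascPochhammer K (j + 1)).eval z = ∏ i ∈ Finset.range (j + 1), (z + i) :=
    asc_eval_prod _ _
  have hProdNe : (∏ i ∈ Finset.range (j + 1), (z + (i : K))) ≠ 0 :=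
    Finset.prod_ne_zero_iff.mpr hne
  have hterm : ∀ k ∈ Finset.range (j + 1),
      (-1 : K) ^ k * (j.choose k : K) * ((j + k).choose k : K) / ((k : K) + z)
        = ((-1 : K) ^ k * (j.choose k : K) * ((j + k).choose k : K) *
            ∏ i ∈ (Finset.range (j + 1)).erase k, (z + (i : K))) /
          ∏ i ∈ Finset.range (j + 1), (z + (i : K)) := by
    intro k hk
    rw [← Finset.mul_prod_erase _ _ hk]
    have hk0 : z + (k : K) ≠ 0 := hne k hk
    have hE : (∏ i ∈ (Finset.range (j + 1)).erase k, (z + (i : K))) ≠ 0 :=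
      Finset.prod_ne_zero_iff.mpr fun i hi => hne i (Finset.mem_of_mem_erase hi)
    rw [add_comm (k : K) z]
    field_simp
  rw [Finset.sum_congr rfl hterm, ← Finset.sum_div]
  have hnum : (∑ k ∈ Finset.range (j + 1),
      (-1 : K) ^ k * (j.choose k : K) * ((j + k).choose k : K) *
        ∏ i ∈ (Finset.range (j + 1)).erase k, (z + (i : K)))
      = (ascPochhammer K j).eval (1 - z) := by
    have := congrArg (Polynomial.eval z) (key_poly_eq (K := K) j)
    rw [Polynomial.eval_finset_sum, Polynomial.eval_comp] at this
    simp only [Polynomial.eval_mul, Polynomial.eval_C, Polynomial.eval_prod,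
      Polynomial.eval_add, Polynomial.eval_X, Polynomial.eval_sub, Polynomial.eval_one] at this
    exact this
  rw [hnum, hProd]
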